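/- Let f : C -> C be holomorphic on C minus ((u + L) union (s + L)) where L = Z + Z*tau, with at most simple poles at points of (u + L) union (s + L), satisfying f(t+1) = f(t), f(t+tau) = exp(2*pi*i*w)*f(t) with w not in L, and with residue 0 at t = u and at t = s. Then f is identically 0. -/

import Mathlib

open Complex Filter Topology Function Set
open scoped Real Pointwise

/-! The hypotheses at the points of `S` are removable singularities, and `S` is a union of two
translates of a discrete lattice, so `f` agrees off `S` with an entire function `g`, which is
still `1`-periodic with `g (z + τ) = c * g z`, `c = exp (2πiw)`. By Cauchy's theorem on the
rectangle with corners `0` and `1 + i Im τ` (whose vertical sides cancel by periodicity), the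
`n`-th Fourier coefficient of `g` on a horizontal line is multiplied by `c * exp (-2πinτ)` when the
line is shifted by `τ`; since `w ∉ ℤ + ℤτ` this factor is not `1`, so all Fourier coefficients of
`g` on every horizontal line vanish and `g = 0`. -/

theorem mem_nhdsNE_of_mem_codiscrete {X : Type*} [TopologicalSpace X] {U : Set X}
    (hU : U ∈ codiscrete X) (x : X) : U ∈ 𝓝[≠] x := by
  simpa using disjoint_principal_right.1 (mem_codiscrete.1 hU x)

theorem dense_of_mem_codiscrete {X : Type*} [TopologicalSpace X] [∀ x : X, (𝓝[≠] x).NeBot]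
    {U : Set X} (hU : U ∈ codiscrete X) : Dense U := fun x ↦
  mem_closure_iff_clusterPt.2 <| NeBot.mono inferInstance <|
    le_inf nhdsWithin_le_nhds (le_principal_iff.2 (mem_nhdsNE_of_mem_codiscrete hU x))

theorem compl_vadd_mem_codiscrete {G : Type*} [AddGroup G] [TopologicalSpace G]
    [ContinuousAdd G] {A : Set G} (hA : Aᶜ ∈ codiscrete G) (u : G) : (u +ᵥ A)ᶜ ∈ codiscrete G := by
  rw [compl_mem_codiscrete_iff] at hA ⊢
  rw [← image_vadd]
  exact ⟨(Homeomorph.addLeft u).isClosedMap _ hA.1, hA.2.image (Homeomorph.addLeft u).isInducing⟩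

theorem add_mem_vadd_iff {G Λ : Type*} [AddCommGroup G] [SetLike Λ G] [AddSubgroupClass Λ G]
    {H : Λ} {ω : G} (hω : ω ∈ H) (u z : G) :
    z + ω ∈ u +ᵥ (H : Set G) ↔ z ∈ u +ᵥ (H : Set G) := by
  simp only [mem_vadd_set_iff_neg_vadd_mem, vadd_eq_add, SetLike.mem_coe, ← add_assoc,
    add_mem_cancel_right hω]

theorem linearIndependent_one_of_im_ne_zero {τ : ℂ} (hτ : τ.im ≠ 0) :
    LinearIndependent ℝ ![1, τ] := by
  refine LinearIndependent.pair_iff.2 fun a b hab ↦ ?_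
  have hb : b = 0 := by simpa [hτ] using congrArg im hab
  subst hb
  simpa using hab

theorem PeriodPair.compl_lattice_mem_codiscrete (L : PeriodPair) :
    (L.lattice : Set ℂ)ᶜ ∈ codiscrete ℂ :=
  compl_mem_codiscrete_iff.2
    ⟨L.isClosed_lattice, SetLike.isDiscrete_iff_discreteTopology.2 inferInstance⟩

theorem PeriodPair.mem_vadd_lattice_iff {L : PeriodPair} {u z : ℂ} :
    z ∈ u +ᵥ (L.lattice : Set ℂ) ↔ ∃ m n : ℤ, z = u + m * L.ω₁ + n * L.ω₂ := by
  simp only [mem_vadd_set_iff_neg_vadd_mem, vadd_eq_add, SetLike.mem_coe, PeriodPair.mem_lattice]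
  refine exists₂_congr fun m n ↦ ⟨fun h ↦ ?_, fun h ↦ ?_⟩ <;> linear_combination -h

theorem exists_differentiable_eqOn_of_tendsto {E : Type*} [NormedAddCommGroup E]
    [NormedSpace ℂ E] [CompleteSpace E] {S : Set ℂ} (hS : Sᶜ ∈ codiscrete ℂ) {f : ℂ → E}
    (hf : DifferentiableOn ℂ f Sᶜ) (hlim : ∀ p ∈ S, ∃ c, Tendsto f (𝓝[Sᶜ] p) (𝓝 c)) :
    ∃ g : ℂ → E, Differentiable ℂ g ∧ EqOn g f Sᶜ := by
  classical
  set g : ℂ → E := fun z ↦ if z ∈ S then limUnder (𝓝[≠] z) f else f z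
  have hgf : EqOn g f Sᶜ := fun z hz ↦ if_neg hz
  have hgS : ∀ z ∈ Sᶜ, DifferentiableAt ℂ g z := fun z hz ↦
    have hSz : Sᶜ ∈ 𝓝 z := (mem_codiscrete'.1 hS).1.mem_nhds hz
    ((hf z hz).differentiableAt hSz).congr_of_eventuallyEq (hgf.eventuallyEq_of_mem hSz)
  refine ⟨g, fun p ↦ ?_, hgf⟩
  by_cases hp : p ∈ S
  · obtain ⟨c, hc⟩ := hlim p hp
    have hSp := mem_nhdsNE_of_mem_codiscrete hS p
    have hnhds : 𝓝[Sᶜ] p = 𝓝[≠] p :=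
      le_antisymm (nhdsWithin_mono _ (compl_subset_compl.2 (singleton_subset_iff.2 hp)))
        (nhdsWithin_le_of_mem hSp)
    rw [hnhds] at hc
    have hgp : g p = c := by simp [g, hp, hc.limUnder_eq]
    have hcont : ContinuousAt g p := continuousWithinAt_compl_self.1 <| by
      rw [ContinuousWithinAt, hgp]
      exact hc.congr' (hgf.eventuallyEq_of_mem hSp).symm
    exact (Complex.analyticAt_of_differentiable_on_punctured_nhds_of_continuousAt
      (eventually_of_mem hSp hgS) hcont).differentiableAt
  · exact hgS p hp

theorem Continuous.add_eq_mul_of_eqOn_dense {g f : ℂ → ℂ} (hg : Continuous g) {U : Set ℂ}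
    (hU : Dense U) (hgf : EqOn g f U) {a c : ℂ} (hUa : ∀ z ∈ U, z + a ∈ U)
    (hf : ∀ z ∈ U, f (z + a) = c * f z) (z : ℂ) : g (z + a) = c * g z :=
  congrFun ((hg.comp (continuous_add_const a)).ext_on hU (continuous_const.mul hg)
    fun z hz ↦ by simp [hgf hz, hgf (hUa z hz), hf z hz]) z

theorem ContinuousMap.eq_zero_of_fourierCoeff_eq_zero {T : ℝ} [Fact (0 < T)]
    (F : C(AddCircle T, ℂ)) (hF : ∀ n, fourierCoeff F n = 0) : F = 0 := by
  have hF' : fourierCoeff F = 0 := funext hF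
  have hsum := hasSum_fourier_series_of_summable (f := F) (hF' ▸ summable_zero)
  simp only [hF', Pi.zero_apply, zero_smul] at hsum
  exact hsum.unique hasSum_zero

theorem Function.Periodic.eq_zero_of_integral_exp_mul_eq_zero {h : ℝ → ℂ} (hp : Periodic h 1)
    (hc : Continuous h) (hn : ∀ n : ℤ, ∫ x in (0 : ℝ)..1, exp (-(2 * π * I * n * x)) * h x = 0)
    (x : ℝ) : h x = 0 := by
  have : Fact ((0 : ℝ) < 1) := ⟨one_pos⟩
  let F : C(AddCircle (1 : ℝ), ℂ) := ⟨hp.lift, hc.quotient_liftOn' _⟩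
  have hFh : ∀ x : ℝ, F x = h x := fun _ ↦ rfl
  have hF : F = 0 := F.eq_zero_of_fourierCoeff_eq_zero fun n ↦ by
    rw [fourierCoeff_eq_intervalIntegral F n 0, zero_add, ← hn n]
    simp [hFh, ← exp_conj, map_ofNat]
  simpa [hFh] using DFunLike.congr_fun hF (x : AddCircle (1 : ℝ))

theorem Function.Periodic.intervalIntegral_comp_add_eq {E : Type*} [NormedAddCommGroup E]
    [NormedSpace ℂ E] [CompleteSpace E] {G : ℂ → E} {T : ℝ} (hT : Periodic G T)
    (hG : Differentiable ℂ G) (ζ : ℂ) :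
    ∫ x in (0 : ℝ)..T, G (x + ζ) = ∫ x in (0 : ℝ)..T, G x := by
  have hrect := Complex.integral_boundary_rect_eq_zero_of_differentiableOn G 0
      (T + ζ.im * I) hG.differentiableOn
  have hside : ∀ y : ℝ, G (T + y * I) = G (y * I) := fun y ↦ by
    rw [add_comm]; exact hT _
  simp only [zero_re, zero_im, add_re, add_im, mul_re, mul_im, ofReal_re, ofReal_im, I_re, I_im,
    ofReal_zero, zero_mul, mul_zero, mul_one, zero_add, add_zero, sub_self, add_sub_cancel_right,
    hside] at hrect
  have hH : Periodic (fun x : ℝ ↦ G (x + ζ.im * I)) T := fun x ↦ by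
    simpa [add_right_comm] using hT (x + ζ.im * I)
  calc ∫ x in (0 : ℝ)..T, G (x + ζ) = ∫ x in (0 : ℝ)..T, G ((x + ζ.re : ℝ) + ζ.im * I) := by
        simp [add_assoc, re_add_im]
    _ = ∫ x in (0 : ℝ)..T, G (x + ζ.im * I) := by
        rw [intervalIntegral.integral_comp_add_right (fun x : ℝ ↦ G (x + ζ.im * I)), zero_add,
          add_comm T, hH.intervalIntegral_add_eq ζ.re 0, zero_add]
    _ = ∫ x in (0 : ℝ)..T, G x := (sub_eq_zero.1 hrect).symm

theorem Function.Periodic.intervalIntegral_exp_mul_eq_zero {g : ℂ → ℂ} (h1 : Periodic g 1)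
    (hg : Differentiable ℂ g) {τ c : ℂ} (hτ : ∀ z, g (z + τ) = c * g z) {n : ℤ}
    (hc : c ≠ exp (2 * π * I * n * τ)) :
    ∫ x in (0 : ℝ)..1, exp (-(2 * π * I * n * x)) * g x = 0 := by
  set G : ℂ → ℂ := fun z ↦ exp (-(2 * π * I * n * z)) * g z
  have hG1 : Periodic G ((1 : ℝ) : ℂ) := fun z ↦ by
    simp only [G, ofReal_one]
    rw [show -(2 * π * I * n * (z + 1)) = -(2 * π * I * n * z) + (-n : ℤ) * (2 * π * I)
      by push_cast; ring, exp_add, exp_int_mul_two_pi_mul_I, mul_one, h1]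
  have hGτ : ∀ z, G (z + τ) = exp (-(2 * π * I * n * τ)) * c * G z := fun z ↦ by
    simp only [G, hτ, mul_add, neg_add, exp_add]; ring
  have hfactor : exp (-(2 * π * I * n * τ)) * c - 1 ≠ 0 := by
    intro h
    apply hc
    calc c = exp (2 * π * I * n * τ) * (exp (-(2 * π * I * n * τ)) * c) := by
          rw [← mul_assoc, ← exp_add, add_neg_cancel, exp_zero, one_mul]
      _ = exp (2 * π * I * n * τ) := by rw [sub_eq_zero.1 h, mul_one]
  have hshift := hG1.intervalIntegral_comp_add_eq (by fun_prop) τ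
  simp only [hGτ, intervalIntegral.integral_const_mul] at hshift
  exact (mul_eq_zero.1 (by linear_combination hshift)).resolve_left hfactor

theorem Function.Periodic.eq_zero_of_quasiperiodic {g : ℂ → ℂ} (h1 : Periodic g 1)
    (hg : Differentiable ℂ g) {τ c : ℂ} (hτ : ∀ z, g (z + τ) = c * g z)
    (hc : ∀ n : ℤ, c ≠ exp (2 * π * I * n * τ)) : g = 0 := by
  funext z
  set g' : ℂ → ℂ := fun w ↦ g (w + z.im * I)
  have h1' : Periodic g' 1 := fun w ↦ by simpa [g', add_right_comm] using h1 (w + z.im * I)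
  have hτ' : ∀ w, g' (w + τ) = c * g' w := fun w ↦ by
    simpa [g', add_right_comm] using hτ (w + z.im * I)
  have hg' : Differentiable ℂ g' := by fun_prop
  have h1ℝ : Periodic (fun x : ℝ ↦ g' x) 1 := fun x ↦ by simpa using h1' x
  simpa [g', re_add_im] using h1ℝ.eq_zero_of_integral_exp_mul_eq_zero
    (hg'.continuous.comp continuous_ofReal)
    (fun n ↦ h1'.intervalIntegral_exp_mul_eq_zero hg' hτ' (hc n)) z.re

theorem exp_two_pi_I_mul_ne_of_not_exists_int {τ w : ℂ} (hw : ¬∃ m n : ℤ, w = m + n * τ) (n : ℤ) :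
    exp (2 * π * I * w) ≠ exp (2 * π * I * n * τ) := fun h ↦ by
  obtain ⟨m, hm⟩ := exp_eq_exp_iff_exists_int.1 h
  exact hw ⟨m, n, mul_left_cancel₀ two_pi_I_ne_zero (by linear_combination hm)⟩

theorem quasiperiodic_zero_residues_eq_zero_general (τ u s w : ℂ) (hτ : 0 < τ.im)
    (hw : ¬∃ m n : ℤ, w = (m : ℂ) + (n : ℂ) * τ)
    (S : Set ℂ)
    (hS : S = {z : ℂ | ∃ m n : ℤ, z = u + (m : ℂ) + (n : ℂ) * τ ∨
      z = s + (m : ℂ) + (n : ℂ) * τ})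
    (f : ℂ → ℂ)
    (hf : DifferentiableOn ℂ f Sᶜ)
    (hext : ∀ p ∈ S, ∃ c : ℂ, Tendsto f (𝓝[Sᶜ] p) (𝓝 c))
    (h1 : ∀ t ∈ Sᶜ, f (t + 1) = f t)
    (h2 : ∀ t ∈ Sᶜ, f (t + τ) = Complex.exp (2 * (Real.pi : ℂ) * Complex.I * w) * f t) :
    ∀ t ∈ Sᶜ, f t = 0 := by
  let L : PeriodPair := ⟨1, τ, linearIndependent_one_of_im_ne_zero hτ.ne'⟩
  have hSL : S = (u +ᵥ (L.lattice : Set ℂ)) ∪ (s +ᵥ (L.lattice : Set ℂ)) := by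
    ext z
    simp only [hS, mem_ofPred_eq, mem_union, PeriodPair.mem_vadd_lattice_iff, L, mul_one,
      exists_or]
  have hcod : Sᶜ ∈ codiscrete ℂ := by
    rw [hSL, compl_union]
    exact inter_mem (compl_vadd_mem_codiscrete L.compl_lattice_mem_codiscrete u)
      (compl_vadd_mem_codiscrete L.compl_lattice_mem_codiscrete s)
  have hinv : ∀ ω ∈ L.lattice, ∀ z ∈ Sᶜ, z + ω ∈ Sᶜ := fun ω hω z ↦ by
    simp only [hSL, mem_compl_iff, mem_union, add_mem_vadd_iff hω, imp_self]
  obtain ⟨g, hg, hgf⟩ := exists_differentiable_eqOn_of_tendsto hcod hf hext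
  have hdense := dense_of_mem_codiscrete hcod
  have hg1 : Periodic g 1 := fun z ↦ by
    simpa using hg.continuous.add_eq_mul_of_eqOn_dense (c := 1) hdense hgf
      (hinv 1 L.ω₁_mem_lattice) (by simpa using h1) z
  have hgτ := hg.continuous.add_eq_mul_of_eqOn_dense hdense hgf (hinv τ L.ω₂_mem_lattice) h2
  have hg0 := hg1.eq_zero_of_quasiperiodic hg hgτ (exp_two_pi_I_mul_ne_of_not_exists_int hw)
  intro t ht
  rw [← hgf ht, hg0, Pi.zero_apply]

/-- Let `L = ℤ + ℤτ` (`Im τ > 0`), `u, s` with `u - s ∉ L`, and `w ∉ L`.  If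
`f : ℂ → ℂ` is holomorphic on the complement `Sᶜ` of `S = (u + L) ∪ (s + L)`, has at
most simple poles with vanishing residue at the points of `S` (equivalently, it has a
finite limit along `Sᶜ` at each point of `S`), satisfies `f(t+1) = f(t)` and
`f(t+τ) = e^{2πiw} f(t)` on `Sᶜ`, then `f` vanishes identically on `Sᶜ`. -/
theorem quasiperiodic_zero_residues_eq_zero (τ u s w : ℂ) (hτ : 0 < τ.im)
    (hus : ¬∃ m n : ℤ, u - s = (m : ℂ) + (n : ℂ) * τ)
    (hw : ¬∃ m n : ℤ, w = (m : ℂ) + (n : ℂ) * τ)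
    (S : Set ℂ)
    (hS : S = {z : ℂ | ∃ m n : ℤ, z = u + (m : ℂ) + (n : ℂ) * τ ∨
      z = s + (m : ℂ) + (n : ℂ) * τ})
    (f : ℂ → ℂ)
    (hf : DifferentiableOn ℂ f Sᶜ)
    (hext : ∀ p ∈ S, ∃ c : ℂ, Tendsto f (𝓝[Sᶜ] p) (𝓝 c))
    (h1 : ∀ t ∈ Sᶜ, f (t + 1) = f t)
    (h2 : ∀ t ∈ Sᶜ, f (t + τ) = Complex.exp (2 * (Real.pi : ℂ) * Complex.I * w) * f t) :
    ∀ t ∈ Sᶜ, f t = 0 :=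
  quasiperiodic_zero_residues_eq_zero_general τ u s w hτ hw S hS f hf hext h1 h2
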